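/- Let (P, Ω) be a poset equipped with an ℝ-flow and let F be a family of intervals in P that contains the empty interval, is closed under pairwise intersections, and is closed under the action of Ω. Let M, N : P → Vect_K be interval-decomposable P-modules whose barcodes satisfy B(M) ⊆ F and B(N) ⊆ F. Then d_H(M, N) ≤ 2 · d_I(M, N). -/

import Mathlib

open CategoryTheory
open scoped Classical ENNReal NNReal

set_option linter.unusedSectionVars false
set_option linter.unusedVariables false

/-! ## Posets, intervals, flows -/

variable {P : Type} [PartialOrder P]

/-- A subset of a poset is poset-convex if it contains every point between two of its points. -/
def PosetConvex (I : Set P) : Prop :=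
  ∀ ⦃p q r : P⦄, p ∈ I → q ∈ I → p ≤ r → r ≤ q → r ∈ I

/-- A subset of a poset is poset-connected if any two of its points are joined by a
zigzag path inside the subset. -/
def PosetConnected (I : Set P) : Prop :=
  ∀ p ∈ I, ∀ q ∈ I,
    Relation.ReflTransGen (fun a b => b ∈ I ∧ (a ≤ b ∨ b ≤ a)) p q

/-- An interval in a poset is a poset-convex and poset-connected subset. -/
def IsInterval (I : Set P) : Prop := PosetConvex I ∧ PosetConnected I

/-- `Q` is a poset-connected component of `U`: a poset-connected subset of `U`, maximal with
respect to inclusion among poset-connected subsets of `U`. -/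
def IsPosetComponent (U Q : Set P) : Prop :=
  Q ⊆ U ∧ PosetConnected Q ∧
    ∀ Q' : Set P, Q' ⊆ U → PosetConnected Q' → Q ⊆ Q' → Q' = Q

/-- A subset `Q` of `I ∩ J` is `(I,J)`-valid. -/
def IsValid (I J Q : Set P) : Prop :=
  ∀ p ∈ Q, (∀ q ∈ I, q ≤ p → q ∈ J) ∧ (∀ r ∈ J, p ≤ r → r ∈ I)

/-- An `ℝ`-flow on a poset. -/
structure RFlow (P : Type) [PartialOrder P] where
  Ω : ℝ → P → P
  mono : ∀ t : ℝ, Monotone (Ω t)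
  mono_param : ∀ {t s : ℝ}, t ≤ s → ∀ p : P, Ω t p ≤ Ω s p
  add : ∀ t s : ℝ, ∀ p : P, Ω (t + s) p = Ω t (Ω s p)
  zero : ∀ p : P, Ω 0 p = p

/-- The `t`-shift `I(t)` of a subset of a poset with an `ℝ`-flow. -/
def RFlow.shiftSet (Φ : RFlow P) (I : Set P) (t : ℝ) : Set P := {p : P | Φ.Ω t p ∈ I}

lemma RFlow.self_le (Φ : RFlow P) {t : ℝ} (ht : 0 ≤ t) (p : P) : p ≤ Φ.Ω t p := by
  have h := Φ.mono_param ht p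
  rwa [Φ.zero] at h

lemma RFlow.self_le_twice (Φ : RFlow P) {t : ℝ} (ht : 0 ≤ t) (p : P) :
    p ≤ Φ.Ω t (Φ.Ω t p) :=
  (Φ.self_le ht p).trans (Φ.self_le ht _)

lemma RFlow.omega_neg_omega (Φ : RFlow P) (t : ℝ) (p : P) : Φ.Ω (-t) (Φ.Ω t p) = p := by
  have h := Φ.add (-t) t p
  rw [neg_add_cancel, Φ.zero] at h
  exact h.symm

lemma RFlow.omega_omega_neg (Φ : RFlow P) (t : ℝ) (p : P) : Φ.Ω t (Φ.Ω (-t) p) = p := by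
  have h := Φ.add t (-t) p
  rw [add_neg_cancel, Φ.zero] at h
  exact h.symm

lemma RFlow.posetConvex_shiftSet (Φ : RFlow P) {I : Set P} (hI : PosetConvex I) (t : ℝ) :
    PosetConvex (Φ.shiftSet I t) := by
  intro p q r hp hq hpr hrq
  exact hI hp hq (Φ.mono t hpr) (Φ.mono t hrq)

lemma RFlow.posetConnected_shiftSet (Φ : RFlow P) {I : Set P} (hI : PosetConnected I) (t : ℝ) :
    PosetConnected (Φ.shiftSet I t) := by
  intro p hp q hq
  have h := hI _ hp _ hq
  have h2 := Relation.ReflTransGen.lift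
    (p := fun a b : P => b ∈ Φ.shiftSet I t ∧ (a ≤ b ∨ b ≤ a)) (fun x : P => Φ.Ω (-t) x)
    (fun a b hab => ⟨show Φ.Ω t (Φ.Ω (-t) b) ∈ I by rw [Φ.omega_omega_neg]; exact hab.1,
      hab.2.imp (fun h' => Φ.mono (-t) h') (fun h' => Φ.mono (-t) h')⟩) _ _ h
  simpa only [Function.onFun, Φ.omega_neg_omega] using h2

lemma RFlow.isInterval_shiftSet (Φ : RFlow P) {I : Set P} (hI : IsInterval I) (t : ℝ) :
    IsInterval (Φ.shiftSet I t) :=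
  ⟨Φ.posetConvex_shiftSet hI.1 t, Φ.posetConnected_shiftSet hI.2 t⟩

lemma RFlow.shiftSet_nonempty (Φ : RFlow P) {I : Set P} (hI : I.Nonempty) (t : ℝ) :
    (Φ.shiftSet I t).Nonempty := by
  obtain ⟨x, hx⟩ := hI
  exact ⟨Φ.Ω (-t) x, show Φ.Ω t (Φ.Ω (-t) x) ∈ I by rw [Φ.omega_omega_neg]; exact hx⟩

/-! ## Characteristic (interval) persistence modules -/

variable (K : Type) [Field K]

/-- The pointwise value of the characteristic module of `I`, as a submodule of `K`. -/
noncomputable def charSub (I : Set P) (p : P) : Submodule K K :=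
  if p ∈ I then ⊤ else ⊥

lemma charSub_eq_top {I : Set P} {p : P} (hp : p ∈ I) : charSub K I p = ⊤ := if_pos hp

lemma charSub_eq_bot {I : Set P} {p : P} (hp : p ∉ I) : charSub K I p = ⊥ := if_neg hp

lemma charElt_eq_zero {I : Set P} {p : P} (hp : p ∉ I) (x : ↥(charSub K I p)) : x = 0 := by
  exact Subtype.ext ((Submodule.eq_bot_iff _).mp (charSub_eq_bot K hp) (x : K) x.2)

/-- The structure maps of the characteristic module of `I`. -/
noncomputable def charMap (I : Set P) (p q : P) :
    ↥(charSub K I p) →ₗ[K] ↥(charSub K I q) :=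
  if h : p ∈ I ∧ q ∈ I then
    { toFun := fun x => ⟨(x : K), by rw [charSub_eq_top K h.2]; exact Submodule.mem_top⟩
      map_add' := fun x y => rfl
      map_smul' := fun c x => rfl }
  else 0

lemma charMap_id (I : Set P) (p : P) : charMap K I p p = LinearMap.id := by
  by_cases hp : p ∈ I
  · simp only [charMap, dif_pos (And.intro hp hp)]
    rfl
  · ext x
    rw [charElt_eq_zero K hp x]
    simp

lemma charMap_comp {I : Set P} (hI : PosetConvex I) {p q r : P} (hpq : p ≤ q) (hqr : q ≤ r) :
    (charMap K I q r).comp (charMap K I p q) = charMap K I p r := by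
  by_cases hp : p ∈ I
  · by_cases hr : r ∈ I
    · have hq : q ∈ I := hI hp hr hpq hqr
      ext x
      simp only [charMap, dif_pos (And.intro hp hq), dif_pos (And.intro hq hr),
        dif_pos (And.intro hp hr), LinearMap.comp_apply, LinearMap.coe_mk, AddHom.coe_mk]
    · ext x
      exact congrArg Subtype.val
        ((charElt_eq_zero K hr ((charMap K I q r).comp (charMap K I p q) x)).trans
          (charElt_eq_zero K hr (charMap K I p r x)).symm)
  · ext x
    rw [charElt_eq_zero K hp x]
    simp

/-- The characteristic persistence module `C(I)` of a poset-convex subset `I`. -/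
noncomputable def charMod (I : Set P) (hI : PosetConvex I) : P ⥤ ModuleCat K where
  obj p := ModuleCat.of K ↥(charSub K I p)
  map {p q} h := ModuleCat.ofHom (charMap K I p q)
  map_id p := ModuleCat.hom_ext (charMap_id K I p)
  map_comp {p q r} h1 h2 := ModuleCat.hom_ext (charMap_comp K hI (leOfHom h1) (leOfHom h2)).symm

/-- The zero persistence module, realized as the characteristic module of the empty interval. -/
noncomputable def zeroPMod : P ⥤ ModuleCat K :=
  charMod K (∅ : Set P) (fun _ _ _ hp _ _ _ => absurd hp (Set.notMem_empty _))

/-! ## Barcodes and interval-decomposable modules -/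

/-- A barcode over a poset: a multiset of nonempty intervals, encoded as an indexed family. -/
structure Barcode (P : Type) [PartialOrder P] where
  ι : Type
  B : ι → Set P
  interval : ∀ a : ι, IsInterval (B a)
  nonempty : ∀ a : ι, (B a).Nonempty

/-- The interval-decomposable module `⊕_{a} C(B a)` associated to a barcode. -/
noncomputable def bcMod (D : Barcode P) : P ⥤ ModuleCat K where
  obj p := ModuleCat.of K (Π₀ a : D.ι, ↥(charSub K (D.B a) p))
  map {p q} h := ModuleCat.ofHom (DFinsupp.mapRange.linearMap (fun a => charMap K (D.B a) p q))
  map_id p := by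
    have h : (fun a : D.ι => charMap K (D.B a) p p)
        = fun a : D.ι => (LinearMap.id : ↥(charSub K (D.B a) p) →ₗ[K] ↥(charSub K (D.B a) p)) := by
      funext a; exact charMap_id K (D.B a) p
    apply ModuleCat.hom_ext
    show DFinsupp.mapRange.linearMap (fun a => charMap K (D.B a) p p) = LinearMap.id
    rw [h, DFinsupp.mapRange.linearMap_id]
  map_comp {p q r} h1 h2 := by
    have h : (fun a : D.ι => charMap K (D.B a) p r)
        = fun a : D.ι => (charMap K (D.B a) q r).comp (charMap K (D.B a) p q) := by
      funext a
      exact (charMap_comp K (D.interval a).1 (leOfHom h1) (leOfHom h2)).symm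
    apply ModuleCat.hom_ext
    show DFinsupp.mapRange.linearMap (fun a => charMap K (D.B a) p r) = _
    rw [h, DFinsupp.mapRange.linearMap_comp]
    rfl

/-- `M` is interval-decomposable with barcode `D`. -/
def IsDecompositionOf (D : Barcode P) (M : P ⥤ ModuleCat K) : Prop :=
  Nonempty (M ≅ bcMod K D)

/-- The shift of a barcode along a flow. -/
noncomputable def Barcode.shift (D : Barcode P) (Φ : RFlow P) (t : ℝ) : Barcode P where
  ι := D.ι
  B a := Φ.shiftSet (D.B a) t
  interval a := Φ.isInterval_shiftSet (D.interval a) t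
  nonempty a := Φ.shiftSet_nonempty (D.nonempty a) t

/-! ## Shifts of modules, interleavings, distances -/

/-- The shift `M(t)` of a persistence module along a flow. -/
noncomputable def Pshift (Φ : RFlow P) (t : ℝ) (M : P ⥤ ModuleCat K) : P ⥤ ModuleCat K :=
  (Φ.mono t).functor ⋙ M

/-- The ordered pair `(M, N)` is left `ε`-interleaved. -/
noncomputable def LeftInterleaved (Φ : RFlow P) {ε : ℝ} (hε : 0 ≤ ε)
    (M N : P ⥤ ModuleCat K) : Prop :=
  ∃ (f : M ⟶ Pshift K Φ ε N) (g : N ⟶ Pshift K Φ ε M),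
    ∀ p : P, f.app p ≫ g.app (Φ.Ω ε p) = M.map (homOfLE (Φ.self_le_twice hε p))

/-- `M` and `N` are `ε`-interleaved. -/
noncomputable def Interleaved (Φ : RFlow P) {ε : ℝ} (hε : 0 ≤ ε)
    (M N : P ⥤ ModuleCat K) : Prop :=
  ∃ (f : M ⟶ Pshift K Φ ε N) (g : N ⟶ Pshift K Φ ε M),
    (∀ p : P, f.app p ≫ g.app (Φ.Ω ε p) = M.map (homOfLE (Φ.self_le_twice hε p))) ∧
    (∀ p : P, g.app p ≫ f.app (Φ.Ω ε p) = N.map (homOfLE (Φ.self_le_twice hε p)))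

/-- The interleaving distance between two persistence modules. -/
noncomputable def dI (Φ : RFlow P) (M N : P ⥤ ModuleCat K) : ℝ≥0∞ :=
  ⨅ (ε : NNReal) (_ : Interleaved K Φ ε.coe_nonneg M N), (ε : ℝ≥0∞)

/-- An interval `I` is `t`-trivial if the transition morphism `C(I) → C(I(t))` vanishes. -/
noncomputable def IsTrivialIv (Φ : RFlow P) {t : ℝ} (ht : 0 ≤ t)
    (I : Set P) (hI : PosetConvex I) : Prop :=
  ∀ p : P, (charMod K I hI).map (homOfLE (Φ.self_le ht p)) = 0

/-- An `ε`-correspondence between two barcodes. -/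
noncomputable def IsCorrespondence (Φ : RFlow P) {ε : ℝ} (hε : 0 ≤ ε)
    (DM DN : Barcode P) (σ : Set (DM.ι × DN.ι)) : Prop :=
  (∀ ab ∈ σ, Interleaved K Φ hε
      (charMod K (DM.B ab.1) (DM.interval ab.1).1) (charMod K (DN.B ab.2) (DN.interval ab.2).1)) ∧
  (∀ a : DM.ι, (∀ b : DN.ι, (a, b) ∉ σ) →
      Interleaved K Φ hε (charMod K (DM.B a) (DM.interval a).1) (zeroPMod K)) ∧
  (∀ b : DN.ι, (∀ a : DM.ι, (a, b) ∉ σ) →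
      Interleaved K Φ hε (zeroPMod K) (charMod K (DN.B b) (DN.interval b).1))

/-- An `ε`-matching between two barcodes. -/
noncomputable def IsMatching (Φ : RFlow P) {ε : ℝ} (hε : 0 ≤ ε)
    (DM DN : Barcode P) (σ : Set (DM.ι × DN.ι)) : Prop :=
  IsCorrespondence K Φ hε DM DN σ ∧
  (∀ a b b', (a, b) ∈ σ → (a, b') ∈ σ → b = b') ∧
  (∀ a a' b, (a, b) ∈ σ → (a', b) ∈ σ → a = a')

/-- The Hausdorff distance between (modules with) barcodes `DM`, `DN`. -/
noncomputable def dH (Φ : RFlow P) (DM DN : Barcode P) : ℝ≥0∞ :=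
  ⨅ (ε : NNReal) (_ : ∃ σ : Set (DM.ι × DN.ι), IsCorrespondence K Φ ε.coe_nonneg DM DN σ),
    (ε : ℝ≥0∞)

/-- The bottleneck distance between (modules with) barcodes `DM`, `DN`. -/
noncomputable def dB (Φ : RFlow P) (DM DN : Barcode P) : ℝ≥0∞ :=
  ⨅ (ε : NNReal) (_ : ∃ σ : Set (DM.ι × DN.ι), IsMatching K Φ ε.coe_nonneg DM DN σ),
    (ε : ℝ≥0∞)

/-! An `ε`-interleaving `f, g` of `⊕ C(I_a)` and `⊕ C(J_b)` has matrix entries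
`f_{ba} : C(I_a) → C(J_b(ε))` and `g_{ab} : C(J_b) → C(I_a(ε))`. If `C(I_a)` is not
`2ε`-interleaved with `0`, some `p` has `p, Ω_{4ε} p ∈ I_a`; then `(g(ε) ∘ f)_{aa} = φ^{2ε}` is
nonzero at `p`, so for some `b` both `f_{ba}` (at `p`) and `g_{ab}` (at `Ω_ε p`) are nonzero.
A nonzero morphism `C(I) → C(J)` is nonzero on all of `I ∩ J` when that set is connected, which
makes `I ∩ J` an `(I, J)`-valid set; closure of `F` under shifts and intersections supplies the
connectedness. Validity of `I_a ∩ J_b(ε)` and `J_b ∩ I_a(ε)` then forces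
`I_a ∩ I_a(2ε) ⊆ J_b(ε)` and `J_b ∩ J_b(2ε) ⊆ I_a(ε)`, and these inclusions make the maps that
are the identity on `I_a ∩ J_b(ε) ∩ J_b(2ε)` and on `J_b ∩ I_a(ε) ∩ I_a(2ε)` a
`2ε`-interleaving of `C(I_a)` and `C(J_b)`. Hence the `2ε`-interleaved pairs form a
`2ε`-correspondence. -/

open Limits

lemma RFlow.shiftSet_eq_image (Φ : RFlow P) (S : Set P) (t : ℝ) :
    Φ.shiftSet S t = Φ.Ω (-t) '' S := by
  ext x
  refine ⟨fun hx => ⟨Φ.Ω t x, hx, Φ.omega_neg_omega t x⟩, ?_⟩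
  rintro ⟨y, hy, rfl⟩
  show Φ.Ω t (Φ.Ω (-t) y) ∈ S
  rwa [Φ.omega_omega_neg]

lemma RFlow.shiftSet_eq_shiftSet_shiftSet (Φ : RFlow P) {ε δ : ℝ}
    (hδ : ∀ p, Φ.Ω δ p = Φ.Ω ε (Φ.Ω ε p)) (S : Set P) :
    Φ.shiftSet S δ = Φ.shiftSet (Φ.shiftSet S ε) ε :=
  Set.ext fun x => show Φ.Ω δ x ∈ S ↔ _ by rw [hδ]; rfl

lemma RFlow.shiftSet_mem (Φ : RFlow P) {F : Set (Set P)}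
    (hFflow : ∀ S ∈ F, ∀ t : ℝ, Φ.Ω t '' S ∈ F) {S : Set P} (hS : S ∈ F) (t : ℝ) :
    Φ.shiftSet S t ∈ F :=
  Φ.shiftSet_eq_image S t ▸ hFflow S hS (-t)

lemma PosetConvex.flow_mem_of_flow_four_mem (Φ : RFlow P) {ε : ℝ} (hε : 0 ≤ ε) {I : Set P}
    (hI : PosetConvex I) {x : P} (hx : x ∈ I) (h4 : Φ.Ω ε (Φ.Ω ε (Φ.Ω ε (Φ.Ω ε x))) ∈ I) :
    Φ.Ω ε x ∈ I ∧ Φ.Ω ε (Φ.Ω ε x) ∈ I ∧ Φ.Ω ε (Φ.Ω ε (Φ.Ω ε x)) ∈ I := by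
  have le1 : ∀ y, y ≤ Φ.Ω ε y := Φ.self_le hε
  exact ⟨hI hx h4 (le1 _) ((le1 _).trans ((le1 _).trans (le1 _))),
    hI hx h4 ((le1 _).trans (le1 _)) ((le1 _).trans (le1 _)),
    hI hx h4 ((le1 _).trans ((le1 _).trans (le1 _))) (le1 _)⟩

lemma PosetConnected.subset_of_forall_step {S Q : Set P} (hS : PosetConnected S)
    (hQ : ∀ x ∈ S ∩ Q, ∀ y ∈ S, x ≤ y ∨ y ≤ x → y ∈ Q) (hne : (S ∩ Q).Nonempty) : S ⊆ Q := by
  obtain ⟨p, hp⟩ := hne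
  have key : ∀ q, Relation.ReflTransGen (fun a b => b ∈ S ∧ (a ≤ b ∨ b ≤ a)) p q → q ∈ S ∩ Q := by
    intro q hpq
    induction hpq with
    | refl => exact hp
    | tail _ hstep ih => exact ⟨hstep.1, hQ _ ih _ hstep.1 hstep.2⟩
  exact fun q hq => (key q (hS p hp.1 q hq)).2

lemma IsValid.inter_subset {I J L : Set P} (hIJ : IsValid I J (I ∩ J)) (hJL : IsValid J L (J ∩ L))
    (hIL : PosetConnected (I ∩ L)) (hne : (I ∩ J ∩ L).Nonempty) : I ∩ L ⊆ J := by
  refine hIL.subset_of_forall_step (fun x ⟨⟨hxI, hxL⟩, hxJ⟩ y ⟨hyI, hyL⟩ hxy => ?_) ?_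
  · rcases hxy with hxy | hyx
    · exact (hJL x ⟨hxJ, hxL⟩).2 y hyL hxy
    · exact (hIJ x ⟨hxI, hxJ⟩).1 y hyI hyx
  · obtain ⟨p, ⟨hpI, hpJ⟩, hpL⟩ := hne
    exact ⟨p, ⟨hpI, hpL⟩, hpJ⟩

lemma IsValid.shiftSet (Φ : RFlow P) {I J : Set P} (h : IsValid I J (I ∩ J)) (t : ℝ) :
    IsValid (Φ.shiftSet I t) (Φ.shiftSet J t) (Φ.shiftSet I t ∩ Φ.shiftSet J t) :=
  fun p hp => ⟨fun q hq hqp => (h (Φ.Ω t p) hp).1 _ hq (Φ.mono t hqp),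
    fun r hr hpr => (h (Φ.Ω t p) hp).2 _ hr (Φ.mono t hpr)⟩

lemma PosetConvex.isValid_inter_shiftSet (Φ : RFlow P) {I : Set P} (hI : PosetConvex I) {t : ℝ}
    (ht : 0 ≤ t) : IsValid I (Φ.shiftSet I t) (I ∩ Φ.shiftSet I t) :=
  fun _ hp => ⟨fun q hq hqp => hI hq hp.2 (Φ.self_le ht q) (Φ.mono t hqp),
    fun r hr hpr => hI hp.1 hr hpr (Φ.self_le ht r)⟩

lemma charSub_coe_eq_zero {I : Set P} {p : P} (hp : p ∉ I) (u : ↥(charSub K I p)) : (u : K) = 0 :=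
  congrArg Subtype.val (charElt_eq_zero K hp u)

lemma charMap_coe (I : Set P) (x y : P) (u : ↥(charSub K I x)) :
    (charMap K I x y u : K) = if x ∈ I ∧ y ∈ I then (u : K) else 0 := by
  by_cases h : x ∈ I ∧ y ∈ I <;> simp [charMap, h]

lemma charSub_linearMap_ext {I J : Set P} {x y : P} {f g : ↥(charSub K I x) →ₗ[K] ↥(charSub K J y)}
    (h : ∀ u, (f u : K) = g u) : f = g :=
  LinearMap.ext fun u => Subtype.ext (h u)

lemma charMod_map_eq_zero {I : Set P} (hI : PosetConvex I) {x y : P} (hxy : x ≤ y)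
    (h : ¬(x ∈ I ∧ y ∈ I)) : (charMod K I hI).map (homOfLE hxy) = 0 :=
  ModuleCat.hom_ext (by simp [charMod, charMap, h]; rfl)

lemma charMod_map_ne_zero {I : Set P} (hI : PosetConvex I) {x y : P} (hxy : x ≤ y) (hx : x ∈ I)
    (hy : y ∈ I) : (charMod K I hI).map (homOfLE hxy) ≠ 0 := by
  intro h
  have h1 : charMap K I x y = 0 := congrArg ModuleCat.Hom.hom h
  have h2 := congrArg Subtype.val
    (LinearMap.congr_fun h1 ⟨1, by rw [charSub_eq_top K hx]; trivial⟩)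
  rw [charMap_coe, if_pos ⟨hx, hy⟩] at h2
  exact one_ne_zero h2

lemma charMap_comp_charMap_of_mem {I : Set P} {x y : P} (hx : x ∈ I) (hy : y ∈ I) :
    (charMap K I y x).comp (charMap K I x y) = LinearMap.id :=
  charSub_linearMap_ext K fun u => by simp [charMap_coe, hx, hy]

lemma isIso_charMod_map {I : Set P} (hI : PosetConvex I) {x y : P} (hxy : x ≤ y) (hx : x ∈ I)
    (hy : y ∈ I) : IsIso ((charMod K I hI).map (homOfLE hxy)) :=
  ⟨ModuleCat.ofHom (charMap K I y x),
    ModuleCat.hom_ext (charMap_comp_charMap_of_mem K hx hy),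
    ModuleCat.hom_ext (charMap_comp_charMap_of_mem K hy hx)⟩

lemma charMod_hom_app_eq_zero {I J : Set P} {hI : PosetConvex I} {hJ : PosetConvex J}
    (h : charMod K I hI ⟶ charMod K J hJ) {x : P} (hx : x ∉ I ∩ J) : h.app x = 0 := by
  refine ModuleCat.hom_ext (LinearMap.ext fun u => ?_)
  by_cases hxI : x ∈ I
  · exact charElt_eq_zero K (fun hxJ => hx ⟨hxI, hxJ⟩) _
  · obtain rfl : u = 0 := charElt_eq_zero K hxI u
    simp

lemma mem_of_charMod_hom_app_ne_zero {I J : Set P} {hI : PosetConvex I} {hJ : PosetConvex J}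
    (h : charMod K I hI ⟶ charMod K J hJ) {x : P} (hx : h.app x ≠ 0) : x ∈ I ∩ J :=
  by_contra fun hx' => hx (charMod_hom_app_eq_zero K h hx')

lemma isValid_inter_of_app_ne_zero {I J : Set P} {hI : PosetConvex I} {hJ : PosetConvex J}
    (h : charMod K I hI ⟶ charMod K J hJ) (hIJ : PosetConnected (I ∩ J)) {x : P}
    (hx : h.app x ≠ 0) : IsValid I J (I ∩ J) := by
  have hmem : ∀ {y}, h.app y ≠ 0 → y ∈ I ∩ J := mem_of_charMod_hom_app_ne_zero K h
  have down : ∀ {y z}, z ≤ y → z ∈ I → h.app y ≠ 0 → h.app z ≠ 0 := fun hzy hz hy hz0 => by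
    have := isIso_charMod_map K hI hzy hz (hmem hy).1
    refine hy ((cancel_epi ((charMod K I hI).map (homOfLE hzy))).1 ?_)
    rw [h.naturality, hz0, zero_comp, comp_zero]
  have up : ∀ {y z}, y ≤ z → z ∈ J → h.app y ≠ 0 → h.app z ≠ 0 := fun hyz hz hy hz0 => by
    have := isIso_charMod_map K hJ hyz (hmem hy).2 hz
    refine hy ((cancel_mono ((charMod K J hJ).map (homOfLE hyz))).1 ?_)
    rw [← h.naturality, hz0, comp_zero, zero_comp]
  have hne : I ∩ J ⊆ {y | h.app y ≠ 0} :=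
    hIJ.subset_of_forall_step (fun y hy z hz hyz => hyz.elim (up · hz.2 hy.2) (down · hz.1 hy.2))
      ⟨x, hmem hx, hx⟩
  exact fun y hy => ⟨fun z hz hzy => (hmem (down hzy hz (hne hy))).2,
    fun z hz hyz => (hmem (up hyz hz (hne hy))).1⟩

/-- `S` is the support of a morphism `C(I) → C(J)` that is the identity on `S`. -/
def IsHomSupport (I J S : Set P) : Prop :=
  S ⊆ I ∩ J ∧ (∀ ⦃x y⦄, x ≤ y → x ∈ I → y ∈ S → x ∈ S) ∧
    (∀ ⦃x y⦄, x ≤ y → x ∈ S → y ∈ J → y ∈ S)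

lemma IsValid.isHomSupport {I J : Set P} (h : IsValid I J (I ∩ J)) : IsHomSupport I J (I ∩ J) :=
  ⟨subset_rfl, fun x _ hxy hx hy => ⟨hx, (h _ hy).1 x hx hxy⟩,
    fun _ y hxy hx hy => ⟨(h _ hx).2 y hy hxy, hy⟩⟩

lemma IsHomSupport.inter {I J L S T : Set P} (hS : IsHomSupport I J S) (hT : IsHomSupport J L T) :
    IsHomSupport I L (S ∩ T) := by
  refine ⟨fun x hx => ⟨(hS.1 hx.1).1, (hT.1 hx.2).2⟩, fun x y hxy hx hy => ?_,
    fun x y hxy hx hy => ?_⟩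
  · have hxS := hS.2.1 hxy hx hy.1
    exact ⟨hxS, hT.2.1 hxy (hS.1 hxS).2 hy.2⟩
  · have hyT := hT.2.2 hxy hx.2 hy
    exact ⟨hS.2.2 hxy hx.1 (hT.1 hyT).1, hyT⟩

noncomputable def supportMap {I J S : Set P} (hS : IsHomSupport I J S) (x : P) :
    ↥(charSub K I x) →ₗ[K] ↥(charSub K J x) :=
  if h : x ∈ S then
    { toFun := fun u => ⟨u, by rw [charSub_eq_top K (hS.1 h).2]; trivial⟩
      map_add' := fun _ _ => rfl
      map_smul' := fun _ _ => rfl }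
  else 0

lemma supportMap_coe {I J S : Set P} (hS : IsHomSupport I J S) (x : P) (u : ↥(charSub K I x)) :
    (supportMap K hS x u : K) = if x ∈ S then (u : K) else 0 := by
  by_cases h : x ∈ S <;> simp [supportMap, h]

noncomputable def supportHom {I J S : Set P} (hI : PosetConvex I) (hJ : PosetConvex J)
    (hS : IsHomSupport I J S) : charMod K I hI ⟶ charMod K J hJ where
  app x := ModuleCat.ofHom (supportMap K hS x)
  naturality x y hxy := by
    refine ModuleCat.hom_ext (charSub_linearMap_ext K fun u => ?_)
    change (supportMap K hS y (charMap K I x y u) : K) = charMap K J x y (supportMap K hS x u)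
    rw [supportMap_coe, charMap_coe, charMap_coe, supportMap_coe]
    by_cases hx : x ∈ I
    · have key : y ∈ S ↔ x ∈ S ∧ y ∈ J :=
        ⟨fun hy => ⟨hS.2.1 (leOfHom hxy) hx hy, (hS.1 hy).2⟩, fun h => hS.2.2 (leOfHom hxy) h.1 h.2⟩
      have hSIJ : S ⊆ I ∩ J := hS.1
      split_ifs <;> grind
    · simp [charSub_coe_eq_zero K hx u]

lemma supportHom_app_comp_eq_map (Φ : RFlow P) {δ : ℝ} (hδ : 0 ≤ δ) {I J S T : Set P}
    (hI : PosetConvex I) (hJ : PosetConvex J) (hS : IsHomSupport I (Φ.shiftSet J δ) S)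
    (hT : IsHomSupport J (Φ.shiftSet I δ) T) {p : P}
    (hST : p ∈ I → (p ∈ S ∧ Φ.Ω δ p ∈ T ↔ Φ.Ω δ (Φ.Ω δ p) ∈ I)) :
    (supportHom K hI (Φ.posetConvex_shiftSet hJ δ) hS).app p ≫
        (supportHom K hJ (Φ.posetConvex_shiftSet hI δ) hT).app (Φ.Ω δ p) =
      (charMod K I hI).map (homOfLE (Φ.self_le_twice hδ p)) := by
  refine ModuleCat.hom_ext (charSub_linearMap_ext K fun u => ?_)
  change (supportMap K hT (Φ.Ω δ p) (supportMap K hS p u) : K) = charMap K I p _ u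
  refine (supportMap_coe K hT _ _).trans ?_
  erw [supportMap_coe K hS p u]
  rw [charMap_coe]
  by_cases hp : p ∈ I
  · have := hST hp
    split_ifs <;> tauto
  · simp [charSub_coe_eq_zero K hp u]

lemma interleaved_of_isHomSupport (Φ : RFlow P) {δ : ℝ} (hδ : 0 ≤ δ) {I J S T : Set P}
    (hI : PosetConvex I) (hJ : PosetConvex J) (hS : IsHomSupport I (Φ.shiftSet J δ) S)
    (hT : IsHomSupport J (Φ.shiftSet I δ) T)
    (hST : ∀ p ∈ I, p ∈ S ∧ Φ.Ω δ p ∈ T ↔ Φ.Ω δ (Φ.Ω δ p) ∈ I)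
    (hTS : ∀ p ∈ J, p ∈ T ∧ Φ.Ω δ p ∈ S ↔ Φ.Ω δ (Φ.Ω δ p) ∈ J) :
    Interleaved K Φ hδ (charMod K I hI) (charMod K J hJ) :=
  ⟨supportHom K hI (Φ.posetConvex_shiftSet hJ δ) hS, supportHom K hJ (Φ.posetConvex_shiftSet hI δ) hT,
    fun _ => supportHom_app_comp_eq_map K Φ hδ hI hJ hS hT (hST _),
    fun _ => supportHom_app_comp_eq_map K Φ hδ hJ hI hT hS (hTS _)⟩

lemma interleaved_zeroPMod_of_forall_not_mem (Φ : RFlow P) {ε : ℝ} (hε : 0 ≤ ε) {I : Set P}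
    (hI : PosetConvex I) (h : ∀ p ∈ I, Φ.Ω ε (Φ.Ω ε p) ∉ I) :
    Interleaved K Φ hε (charMod K I hI) (zeroPMod K) :=
  ⟨0, 0, fun p => zero_comp.trans (charMod_map_eq_zero K hI _ fun hp => h p hp.1 hp.2).symm,
    fun p => zero_comp.trans (charMod_map_eq_zero K _ (Φ.self_le_twice hε p) fun hp => hp.1.elim).symm⟩

lemma Interleaved.symm {Φ : RFlow P} {ε : ℝ} {hε : 0 ≤ ε} {M N : P ⥤ ModuleCat K}
    (h : Interleaved K Φ hε M N) : Interleaved K Φ hε N M :=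
  let ⟨f, g, hfg, hgf⟩ := h
  ⟨g, f, hgf, hfg⟩

lemma Interleaved.leftInterleaved {Φ : RFlow P} {ε : ℝ} {hε : 0 ≤ ε} {M N : P ⥤ ModuleCat K}
    (h : Interleaved K Φ hε M N) : LeftInterleaved K Φ hε M N :=
  let ⟨f, g, hfg, _⟩ := h
  ⟨f, g, hfg⟩

lemma conj_comp_conj_eq {C : Type*} [Category C] {X X' Y Y' Z Z' : C} (eX : X ≅ X') (eY : Y ≅ Y')
    (eZ : Z ≅ Z') {f : X ⟶ Y} {g : Y ⟶ Z} {m : X ⟶ Z} {m' : X' ⟶ Z'} (hfg : f ≫ g = m)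
    (hm : m ≫ eZ.hom = eX.hom ≫ m') : (eX.inv ≫ f ≫ eY.hom) ≫ (eY.inv ≫ g ≫ eZ.hom) = m' := by
  simp only [Category.assoc, Iso.hom_inv_id_assoc]
  rw [reassoc_of% hfg, hm, Iso.inv_hom_id_assoc]

lemma LeftInterleaved.of_iso {Φ : RFlow P} {ε : ℝ} {hε : 0 ≤ ε} {M M' N N' : P ⥤ ModuleCat K}
    (eM : M ≅ M') (eN : N ≅ N') (h : LeftInterleaved K Φ hε M N) :
    LeftInterleaved K Φ hε M' N' := by
  obtain ⟨f, g, hfg⟩ := h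
  exact ⟨eM.inv ≫ f ≫ Functor.whiskerLeft _ eN.hom, eN.inv ≫ g ≫ Functor.whiskerLeft _ eM.hom,
    fun p => conj_comp_conj_eq (eM.app p) (eN.app _) (eM.app _) (hfg p)
      (eM.hom.naturality (homOfLE (Φ.self_le_twice hε p)))⟩

lemma DFinsupp.exists_comp_lsingle_lapply_ne_zero {R ι X Y : Type*} [Semiring R] [DecidableEq ι]
    {M : ι → Type*} [∀ i, AddCommMonoid (M i)] [∀ i, Module R (M i)] [AddCommMonoid X]
    [Module R X] [AddCommMonoid Y] [Module R Y] (φ : X →ₗ[R] Π₀ i, M i) (ψ : (Π₀ i, M i) →ₗ[R] Y)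
    (h : ψ ∘ₗ φ ≠ 0) : ∃ i, ψ ∘ₗ DFinsupp.lsingle i ∘ₗ DFinsupp.lapply i ∘ₗ φ ≠ 0 := by
  obtain ⟨x, hx⟩ : ∃ x, ψ (φ x) ≠ 0 := by
    by_contra! h'
    exact h (LinearMap.ext h')
  classical
  rw [← DFinsupp.sum_single (f := φ x), DFinsupp.sum, map_sum] at hx
  obtain ⟨i, -, hi⟩ := Finset.exists_ne_zero_of_sum_ne_zero hx
  exact ⟨i, fun h0 => hi (LinearMap.congr_fun h0 x)⟩

lemma Barcode.posetConvex (D : Barcode P) (a : D.ι) : PosetConvex (D.B a) :=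
  (D.interval a).1

noncomputable def bcMod.incl (D : Barcode P) (a : D.ι) :
    charMod K (D.B a) (D.posetConvex a) ⟶ bcMod K D where
  app x := ModuleCat.ofHom (DFinsupp.lsingle (R := K) (M := fun i => ↥(charSub K (D.B i) x)) a)
  naturality x y hxy := ModuleCat.hom_ext (LinearMap.ext fun u =>
    (DFinsupp.mapRange_single (hf := fun i => map_zero (charMap K (D.B i) x y))).symm)

noncomputable def bcMod.proj (D : Barcode P) (b : D.ι) :
    bcMod K D ⟶ charMod K (D.B b) (D.posetConvex b) where
  app x := ModuleCat.ofHom (DFinsupp.lapply (R := K) (M := fun i => ↥(charSub K (D.B i) x)) b)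
  naturality x y hxy := ModuleCat.hom_ext (LinearMap.ext fun v =>
    DFinsupp.mapRange_apply (fun i => charMap K (D.B i) x y) (fun i => map_zero _) v b)

lemma bcMod.incl_proj (D : Barcode P) (a : D.ι) : bcMod.incl K D a ≫ bcMod.proj K D a = 𝟙 _ := by
  ext x u
  change (DFinsupp.single a u : Π₀ i, ↥(charSub K (D.B i) x)) a = u
  exact DFinsupp.single_eq_same

-- `Pshift K Φ ε (charMod K J _)` is definitionally `charMod K (Φ.shiftSet J ε) _`.
noncomputable def bcMod.entry (Φ : RFlow P) {ε : ℝ} {D D' : Barcode P}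
    (f : bcMod K D ⟶ Pshift K Φ ε (bcMod K D')) (a : D.ι) (b : D'.ι) :
    charMod K (D.B a) (D.posetConvex a) ⟶
      charMod K (Φ.shiftSet (D'.B b) ε) (Φ.posetConvex_shiftSet (D'.posetConvex b) ε) :=
  bcMod.incl K D a ≫ f ≫ Functor.whiskerLeft (Φ.mono ε).functor (bcMod.proj K D' b)

lemma exists_entry_comp_entry_ne_zero (Φ : RFlow P) {ε : ℝ} (hε : 0 ≤ ε) {DM DN : Barcode P}
    (f : bcMod K DM ⟶ Pshift K Φ ε (bcMod K DN)) (g : bcMod K DN ⟶ Pshift K Φ ε (bcMod K DM))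
    (hfg : ∀ p, f.app p ≫ g.app (Φ.Ω ε p) = (bcMod K DM).map (homOfLE (Φ.self_le_twice hε p)))
    (a : DM.ι) {p : P} (hp : p ∈ DM.B a) (hp2 : Φ.Ω ε (Φ.Ω ε p) ∈ DM.B a) :
    ∃ b, (bcMod.entry K Φ f a b).app p ≫ (bcMod.entry K Φ g b a).app (Φ.Ω ε p) ≠ 0 := by
  set φ := ((bcMod.incl K DM a).app p ≫ f.app p).hom
  set ψ := (g.app (Φ.Ω ε p) ≫ (bcMod.proj K DM a).app (Φ.Ω ε (Φ.Ω ε p))).hom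
  have hmap : ψ ∘ₗ φ = charMap K (DM.B a) p (Φ.Ω ε (Φ.Ω ε p)) := by
    refine (congrArg (fun m => ((bcMod.incl K DM a).app p ≫ m ≫
      (bcMod.proj K DM a).app (Φ.Ω ε (Φ.Ω ε p))).hom) (hfg p)).trans (LinearMap.ext fun u => ?_)
    change (DFinsupp.mapRange (fun i => charMap K (DM.B i) _ _) (fun i => map_zero _)
      (DFinsupp.single a u)) a = _
    erw [DFinsupp.mapRange_single, DFinsupp.single_eq_same]
    rfl
  have hne : ψ ∘ₗ φ ≠ 0 := fun h0 => charMod_map_ne_zero K (DM.posetConvex a)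
    (Φ.self_le_twice hε p) hp hp2 (ModuleCat.hom_ext (hmap.symm.trans h0))
  obtain ⟨b, hb⟩ := DFinsupp.exists_comp_lsingle_lapply_ne_zero φ ψ hne
  exact ⟨b, fun h0 => hb (congrArg ModuleCat.Hom.hom h0)⟩

lemma mem_composite_support_iff (Φ : RFlow P) {ε δ : ℝ} (hε : 0 ≤ ε)
    (hδ : ∀ p, Φ.Ω δ p = Φ.Ω ε (Φ.Ω ε p)) {I J : Set P} (hI : PosetConvex I)
    (hIJ : I ∩ Φ.shiftSet (Φ.shiftSet I ε) ε ⊆ Φ.shiftSet J ε) {x : P} (hx : x ∈ I) :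
    x ∈ (I ∩ Φ.shiftSet J ε) ∩ (Φ.shiftSet J ε ∩ Φ.shiftSet (Φ.shiftSet J ε) ε) ∧
        Φ.Ω δ x ∈ (J ∩ Φ.shiftSet I ε) ∩ (Φ.shiftSet I ε ∩ Φ.shiftSet (Φ.shiftSet I ε) ε) ↔
      Φ.Ω δ (Φ.Ω δ x) ∈ I := by
  simp only [hδ]
  refine ⟨fun h => h.2.2.2, fun h4 => ?_⟩
  obtain ⟨h1, h2, h3⟩ := hI.flow_mem_of_flow_four_mem Φ hε hx h4
  have j1 : Φ.Ω ε x ∈ J := hIJ ⟨hx, h2⟩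
  have j2 : Φ.Ω ε (Φ.Ω ε x) ∈ J := hIJ ⟨h1, h3⟩
  exact ⟨⟨⟨hx, j1⟩, j1, j2⟩, ⟨j2, h3⟩, h3, h4⟩

lemma interleaved_charMod_of_app_ne_zero (Φ : RFlow P) {ε δ : ℝ} (hε : 0 ≤ ε) (hδ0 : 0 ≤ δ)
    (hδ : ∀ p, Φ.Ω δ p = Φ.Ω ε (Φ.Ω ε p)) {I J : Set P} (hI : PosetConvex I) (hJ : PosetConvex J)
    (hIJ : PosetConnected (I ∩ Φ.shiftSet J ε)) (hJI : PosetConnected (J ∩ Φ.shiftSet I ε))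
    (hII : PosetConnected (I ∩ Φ.shiftSet (Φ.shiftSet I ε) ε))
    (hJJ : PosetConnected (J ∩ Φ.shiftSet (Φ.shiftSet J ε) ε))
    (u : charMod K I hI ⟶ charMod K (Φ.shiftSet J ε) (Φ.posetConvex_shiftSet hJ ε))
    (v : charMod K J hJ ⟶ charMod K (Φ.shiftSet I ε) (Φ.posetConvex_shiftSet hI ε)) {p : P}
    (hu : u.app p ≠ 0) (hv : v.app (Φ.Ω ε p) ≠ 0)
    (hp4 : Φ.Ω ε (Φ.Ω ε (Φ.Ω ε (Φ.Ω ε p))) ∈ I) :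
    Interleaved K Φ hδ0 (charMod K I hI) (charMod K J hJ) := by
  obtain ⟨hpI, hpJ⟩ := mem_of_charMod_hom_app_ne_zero K u hu
  obtain ⟨hqJ, hqI⟩ := mem_of_charMod_hom_app_ne_zero K v hv
  have vIJ := isValid_inter_of_app_ne_zero K u hIJ hu
  have vJI := isValid_inter_of_app_ne_zero K v hJI hv
  have hIJI : I ∩ Φ.shiftSet (Φ.shiftSet I ε) ε ⊆ Φ.shiftSet J ε :=
    vIJ.inter_subset (vJI.shiftSet Φ ε) hII ⟨p, ⟨hpI, hpJ⟩, hqI⟩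
  have hJIJ : J ∩ Φ.shiftSet (Φ.shiftSet J ε) ε ⊆ Φ.shiftSet I ε :=
    vJI.inter_subset (vIJ.shiftSet Φ ε) hJJ ⟨Φ.Ω ε p, ⟨hqJ, hqI⟩, hIJI ⟨hqI, hp4⟩⟩
  refine interleaved_of_isHomSupport K Φ hδ0 hI hJ ?_ ?_
    (fun x hx => mem_composite_support_iff Φ hε hδ hI hIJI hx)
    (fun x hx => mem_composite_support_iff Φ hε hδ hJ hJIJ hx)
  · rw [Φ.shiftSet_eq_shiftSet_shiftSet hδ]
    exact vIJ.isHomSupport.inter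
      ((Φ.posetConvex_shiftSet hJ ε).isValid_inter_shiftSet Φ hε).isHomSupport
  · rw [Φ.shiftSet_eq_shiftSet_shiftSet hδ]
    exact vJI.isHomSupport.inter
      ((Φ.posetConvex_shiftSet hI ε).isValid_inter_shiftSet Φ hε).isHomSupport

lemma exists_interleaved_of_leftInterleaved (Φ : RFlow P) {F : Set (Set P)}
    (hFiv : ∀ S ∈ F, IsInterval S) (hFcap : ∀ S ∈ F, ∀ T ∈ F, S ∩ T ∈ F)
    (hFflow : ∀ S ∈ F, ∀ t : ℝ, Φ.Ω t '' S ∈ F) {ε δ : ℝ} (hε : 0 ≤ ε) (hδ0 : 0 ≤ δ)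
    (hδ : ∀ p, Φ.Ω δ p = Φ.Ω ε (Φ.Ω ε p)) {DM DN : Barcode P} (hBM : ∀ a, DM.B a ∈ F)
    (hBN : ∀ b, DN.B b ∈ F) (hL : LeftInterleaved K Φ hε (bcMod K DM) (bcMod K DN)) (a : DM.ι)
    {p : P} (hp : p ∈ DM.B a) (hp4 : Φ.Ω δ (Φ.Ω δ p) ∈ DM.B a) :
    ∃ b, Interleaved K Φ hδ0 (charMod K (DM.B a) (DM.posetConvex a))
      (charMod K (DN.B b) (DN.posetConvex b)) := by
  obtain ⟨f, g, hfg⟩ := hL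
  simp only [hδ] at hp4
  have hp2 := ((DM.posetConvex a).flow_mem_of_flow_four_mem Φ hε hp hp4).2.1
  obtain ⟨b, hb⟩ := exists_entry_comp_entry_ne_zero K Φ hε f g hfg a hp hp2
  have conn : ∀ {S T}, S ∈ F → T ∈ F → PosetConnected (S ∩ T) := fun hS hT =>
    (hFiv _ (hFcap _ hS _ hT)).2
  have shift : ∀ {S}, S ∈ F → Φ.shiftSet S ε ∈ F := fun hS => Φ.shiftSet_mem hFflow hS ε
  exact ⟨b, interleaved_charMod_of_app_ne_zero K Φ hε hδ0 hδ _ _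
    (conn (hBM a) (shift (hBN b))) (conn (hBN b) (shift (hBM a)))
    (conn (hBM a) (shift (shift (hBM a)))) (conn (hBN b) (shift (shift (hBN b))))
    _ _ (fun h0 => hb (by rw [h0]; exact zero_comp)) (fun h0 => hb (by rw [h0]; exact comp_zero)) hp4⟩

lemma interleaved_zeroPMod_or_exists_interleaved (Φ : RFlow P) {F : Set (Set P)}
    (hFiv : ∀ S ∈ F, IsInterval S) (hFcap : ∀ S ∈ F, ∀ T ∈ F, S ∩ T ∈ F)
    (hFflow : ∀ S ∈ F, ∀ t : ℝ, Φ.Ω t '' S ∈ F) {ε δ : ℝ} (hε : 0 ≤ ε) (hδ0 : 0 ≤ δ)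
    (hδ : ∀ p, Φ.Ω δ p = Φ.Ω ε (Φ.Ω ε p)) {DM DN : Barcode P} (hBM : ∀ a, DM.B a ∈ F)
    (hBN : ∀ b, DN.B b ∈ F) (hL : LeftInterleaved K Φ hε (bcMod K DM) (bcMod K DN)) (a : DM.ι) :
    Interleaved K Φ hδ0 (charMod K (DM.B a) (DM.posetConvex a)) (zeroPMod K) ∨
      ∃ b, Interleaved K Φ hδ0 (charMod K (DM.B a) (DM.posetConvex a))
        (charMod K (DN.B b) (DN.posetConvex b)) := by
  by_cases h : ∃ p ∈ DM.B a, Φ.Ω δ (Φ.Ω δ p) ∈ DM.B a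
  · obtain ⟨p, hp, hp4⟩ := h
    exact Or.inr (exists_interleaved_of_leftInterleaved K Φ hFiv hFcap hFflow hε hδ0 hδ hBM hBN
      hL a hp hp4)
  · push Not at h
    exact Or.inl (interleaved_zeroPMod_of_forall_not_mem K Φ hδ0 _ h)

lemma exists_isCorrespondence (Φ : RFlow P) {F : Set (Set P)}
    (hFiv : ∀ S ∈ F, IsInterval S) (hFcap : ∀ S ∈ F, ∀ T ∈ F, S ∩ T ∈ F)
    (hFflow : ∀ S ∈ F, ∀ t : ℝ, Φ.Ω t '' S ∈ F) {ε δ : ℝ} (hε : 0 ≤ ε) (hδ0 : 0 ≤ δ)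
    (hδ : ∀ p, Φ.Ω δ p = Φ.Ω ε (Φ.Ω ε p)) {DM DN : Barcode P} (hBM : ∀ a, DM.B a ∈ F)
    (hBN : ∀ b, DN.B b ∈ F) (hMN : LeftInterleaved K Φ hε (bcMod K DM) (bcMod K DN))
    (hNM : LeftInterleaved K Φ hε (bcMod K DN) (bcMod K DM)) :
    ∃ σ, IsCorrespondence K Φ hδ0 DM DN σ := by
  refine ⟨{ab | Interleaved K Φ hδ0 (charMod K (DM.B ab.1) (DM.posetConvex ab.1))
    (charMod K (DN.B ab.2) (DN.posetConvex ab.2))}, fun _ h => h, fun a ha => ?_, fun b hb => ?_⟩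
  · exact (interleaved_zeroPMod_or_exists_interleaved K Φ hFiv hFcap hFflow hε hδ0 hδ hBM hBN
      hMN a).resolve_right fun ⟨b, hab⟩ => ha b hab
  · exact ((interleaved_zeroPMod_or_exists_interleaved K Φ hFiv hFcap hFflow hε hδ0 hδ hBN hBM
      hNM b).resolve_right fun ⟨a, hba⟩ => hb a hba.symm).symm

theorem hausdorff_stability (Φ : RFlow P)
    (F : Set (Set P)) (hFiv : ∀ S ∈ F, IsInterval S)
    (hFcap : ∀ S ∈ F, ∀ T ∈ F, S ∩ T ∈ F)
    (hFflow : ∀ S ∈ F, ∀ t : ℝ, Φ.Ω t '' S ∈ F)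
    (M N : P ⥤ ModuleCat K) (DM DN : Barcode P)
    (hM : IsDecompositionOf K DM M) (hN : IsDecompositionOf K DN N)
    (hBM : ∀ a : DM.ι, DM.B a ∈ F) (hBN : ∀ b : DN.ι, DN.B b ∈ F) :
    dH K Φ DM DN ≤ 2 * dI K Φ M N := by
  obtain ⟨eM⟩ := hM
  obtain ⟨eN⟩ := hN
  have key : ∀ e : ℝ≥0, Interleaved K Φ e.coe_nonneg M N → dH K Φ DM DN ≤ 2 * e := by
    intro e he
    have h2e : ∀ p, Φ.Ω ((2 * e : ℝ≥0) : ℝ) p = Φ.Ω e (Φ.Ω e p) := fun p => by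
      rw [NNReal.coe_mul, NNReal.coe_two, two_mul, Φ.add]
    obtain ⟨σ, hσ⟩ := exists_isCorrespondence K Φ hFiv hFcap hFflow e.coe_nonneg
      (2 * e).coe_nonneg h2e hBM hBN (he.leftInterleaved.of_iso K eM eN)
      (he.symm.leftInterleaved.of_iso K eN eM)
    exact iInf₂_le_of_le (2 * e) ⟨σ, hσ⟩ (by push_cast; rfl)
  rw [dI, ENNReal.mul_iInf_of_ne two_ne_zero ENNReal.ofNat_ne_top]
  refine le_iInf fun e => ?_
  rw [ENNReal.mul_iInf_of_ne two_ne_zero ENNReal.ofNat_ne_top]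
  exact le_iInf (key e)
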